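/- The inequality 1 > (1−q)·(sin x)/x + q·(tan x)/x holds for all x in (0, π/2) if and only if q ≤ 0. -/

import Mathlib

/-!
Multiplying by `x > 0`, the inequality reads `(1 - q) sin x + q tan x < x`. For `q ≤ 0` the left
side is at most `sin x < x`, because `sin x < x < tan x` on `(0, π/2)`. For `q > 0` the left side
tends to `+∞` as `x → π/2⁻`, since `tan x` does, so it eventually exceeds `x < π/2`.
-/

open Real Filter Topology

lemma sin_lt_tan {x : ℝ} (h0 : 0 < x) (h1 : x < π / 2) : sin x < tan x :=
  (sin_lt h0).trans (lt_tan h0 h1)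

lemma one_sub_mul_sin_add_mul_tan_lt {q x : ℝ} (hq : q ≤ 0) (h0 : 0 < x) (h1 : x < π / 2) :
    (1 - q) * sin x + q * tan x < x := by
  have : q * (tan x - sin x) ≤ 0 :=
    mul_nonpos_of_nonpos_of_nonneg hq (sub_nonneg.mpr (sin_lt_tan h0 h1).le)
  linarith [sin_lt h0]

lemma tendsto_one_sub_mul_sin_add_mul_tan_atTop {q : ℝ} (hq : 0 < q) :
    Tendsto (fun x => (1 - q) * sin x + q * tan x) (𝓝[<] (π / 2)) atTop :=
  (((continuous_sin.tendsto _).mono_left nhdsWithin_le_nhds).const_mul (1 - q)).add_atTop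
    (tendsto_tan_pi_div_two.const_mul_atTop hq)

lemma eventually_mem_Ioo_zero_pi_div_two : ∀ᶠ x in 𝓝[<] (π / 2), x ∈ Set.Ioo 0 (π / 2) :=
  Ioo_mem_nhdsLT (by positivity)

theorem huygens_type_q_circular (q : ℝ) :
    (∀ x : ℝ, 0 < x → x < π / 2 →
      1 > (1 - q) * Real.sin x / x + q * Real.tan x / x) ↔ q ≤ 0 := by
  have key : ∀ x : ℝ, 0 < x →
      (1 > (1 - q) * sin x / x + q * tan x / x ↔ (1 - q) * sin x + q * tan x < x) := by
    intro x hx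
    rw [gt_iff_lt, ← add_div, div_lt_one hx]
  refine ⟨fun h => ?_, fun hq x h0 h1 => (key x h0).mpr (one_sub_mul_sin_add_mul_tan_lt hq h0 h1)⟩
  by_contra! hq
  obtain ⟨x, hbig, h0, h1⟩ :=
    (((tendsto_one_sub_mul_sin_add_mul_tan_atTop hq).eventually_gt_atTop (π / 2)).and
      eventually_mem_Ioo_zero_pi_div_two).exists
  exact ((key x h0).mp (h x h0 h1)).not_gt (h1.trans hbig)
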